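/- arXiv:1902.02848 — 6 statements merged into one kernel-verified Lean document; each statement's English description precedes it below -/
import Mathlib

section
/- Let A be a unital ring (or algebra), a, b ∈ A, t₁, t₂, ρ scalars, and suppose 1 − t₁a and 1 − t₂b are invertible. Set a(t₁) = (1 − t₁a)^{-1} − h_a·1 and b(t₂) = (1 − t₂b)^{-1} − h_b·1 where h_a, h_b are arbitrary scalars. Then (1 − t₁a)(1 − ρ a(t₁)b(t₂))(1 − t₂b) = c₀ + c₁a + c₂b + c₃ab, where c₀ = 1 − ρ(h_a − 1)(h_b − 1), c₁ = −t₁(1 + ρh_a − ρh_a h_b), c₂ = −t₂(1 + ρh_b − ρh_a h_b), and c₃ = t₁t₂(1 − ρh_a h_b). -/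
/-! Multiplying out, the outer factors absorb the inverses:
`(1 - t₁a) a(t₁) = 1 - h_a (1 - t₁a)` and `b(t₂) (1 - t₂b) = 1 - h_b (1 - t₂b)`.
So the left side equals `(1 - t₁a)(1 - t₂b) - ρ (1 - h_a (1 - t₁a)) (1 - h_b (1 - t₂b))`,
which is affine in `a`, in `b` and in `ab`; its coefficients are the `cᵢ`. -/

section

variable {R A : Type*} [CommSemiring R] [Ring A] [Algebra R A]

theorem mul_inverse_sub_smul_one {u : A} (hu : IsUnit u) (h : R) :
    u * (Ring.inverse u - h • (1 : A)) = 1 - h • u := by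
  rw [mul_sub, Ring.mul_inverse_cancel u hu, mul_smul_comm, mul_one]

theorem inverse_sub_smul_one_mul {v : A} (hv : IsUnit v) (h : R) :
    (Ring.inverse v - h • (1 : A)) * v = 1 - h • v := by
  rw [sub_mul, Ring.inverse_mul_cancel v hv, smul_mul_assoc, one_mul]

theorem mul_one_sub_smul_mul_mul (u v x y : A) (ρ : R) :
    u * (1 - ρ • (x * y)) * v = u * v - ρ • ((u * x) * (y * v)) := by
  simp only [mul_sub, sub_mul, mul_one, mul_smul_comm, smul_mul_assoc, mul_assoc]

end

/-- Haagerup-type algebraic identity. In a unital ℂ-algebra, with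
`1 - t₁ • a` and `1 - t₂ • b` invertible,
`a(t₁) = (1 - t₁a)⁻¹ - h_a·1`, `b(t₂) = (1 - t₂b)⁻¹ - h_b·1`, one has
`(1 - t₁a)(1 - ρ a(t₁)b(t₂))(1 - t₂b) = c₀·1 + c₁·a + c₂·b + c₃·(ab)` with the
stated coefficients, for arbitrary scalars `h_a, h_b, ρ`. -/
theorem stmt_4 {A : Type*} [Ring A] [Algebra ℂ A] (a b : A)
    (t₁ t₂ ρ ha hb : ℂ)
    (hua : IsUnit (1 - t₁ • a)) (hub : IsUnit (1 - t₂ • b)) :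
    let at₁ : A := Ring.inverse (1 - t₁ • a) - ha • (1 : A)
    let bt₂ : A := Ring.inverse (1 - t₂ • b) - hb • (1 : A)
    let c₀ : ℂ := 1 - ρ * (ha - 1) * (hb - 1)
    let c₁ : ℂ := -t₁ * (1 + ρ * ha - ρ * ha * hb)
    let c₂ : ℂ := -t₂ * (1 + ρ * hb - ρ * ha * hb)
    let c₃ : ℂ := t₁ * t₂ * (1 - ρ * ha * hb)
    (1 - t₁ • a) * (1 - ρ • (at₁ * bt₂)) * (1 - t₂ • b) =
      c₀ • (1 : A) + c₁ • a + c₂ • b + c₃ • (a * b) := by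
  intro at₁ bt₂ c₀ c₁ c₂ c₃
  rw [mul_one_sub_smul_mul_mul, mul_inverse_sub_smul_one hua, inverse_sub_smul_one_mul hub]
  simp only [c₀, c₁, c₂, c₃, mul_sub, sub_mul, smul_sub, smul_smul, mul_one, one_mul,
    mul_smul_comm, smul_mul_assoc]
  match_scalars <;> ring
end

section
/- Let (A, φ, ψ) be a unital C*-algebra with two states, and let a, b ∈ A be conditionally free w.r.t. (φ, ψ) with ψ(a') = ψ(b') = 0 where a' = a(t₁) := (1 − t₁a)^{-1} − ψ((1 − t₁a)^{-1})·1 and b' = b(t₂) := (1 − t₂b)^{-1} − ψ((1 − t₂b)^{-1})·1 (for |t₁| < 1/‖a‖, |t₂| < 1/‖b‖). If ρ ∈ ℂ with ‖ρ a' b'‖ < 1, then φ(Σ_{n≥0} (ρ a' b')^n) = (1 − ρ φ(a')φ(b'))^{-1}. -/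
open scoped ComplexOrder

/-- Conditional freeness of two subalgebras w.r.t. a pair of functionals. -/
def CondFree {A : Type*} [Ring A] [Algebra ℂ A] (φ ψ : A → ℂ)
    (Aa Ab : Subalgebra ℂ A) : Prop :=
  ∀ n : ℕ, 2 ≤ n → ∀ κ : Fin n → Bool,
    (∀ i : Fin n, ∀ h : i.1 + 1 < n, κ i ≠ κ ⟨i.1 + 1, h⟩) →
    ∀ a : Fin n → A, (∀ i, a i ∈ (if κ i then Ab else Aa)) →
    (∀ i, ψ (a i) = 0) →
    φ (List.ofFn a).prod = ∏ i, φ (a i)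

private lemma alt_word_prod {M : Type*} [Monoid M] (x y : M) :
    ∀ n : ℕ, (List.ofFn fun i : Fin (2 * n) =>
      if (i : ℕ) % 2 = 0 then x else y).prod = (x * y) ^ n := by
  intro n
  induction n with
  | zero => simp
  | succ n ih =>
    have h : 2 * (n + 1) = 2 * n + 2 := by ring
    simp only [Nat.mul_succ]
    rw [List.ofFn_add (f := fun i : Fin (2 * n + 2) =>
      if (i : ℕ) % 2 = 0 then x else y)]
    rw [List.prod_append]
    have h1 : (List.ofFn fun i : Fin (2 * n) =>
        if ((Fin.castLE (Nat.le_add_right (2 * n) 2) i : Fin (2 * n + 2)) : ℕ) % 2 = 0 then x else y).prod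
        = (x * y) ^ n := by
      simpa using ih
    have h2 : (List.ofFn fun j : Fin 2 =>
        if ((Fin.natAdd (2 * n) j : Fin (2 * n + 2)) : ℕ) % 2 = 0 then x else y).prod
        = x * y := by
      simp [List.ofFn_succ, Fin.natAdd, Nat.add_mod, Nat.mul_mod_right]
    rw [h1, h2, pow_succ]

/-- elements of a subalgebra's topological closure: tsum of members -/
private lemma tsum_mem_closure {A : Type*} [NormedRing A] [NormedAlgebra ℂ A]
    [CompleteSpace A] (S : Subalgebra ℂ A) (f : ℕ → A) (hf : Summable f)
    (hmem : ∀ n, f n ∈ S) : (∑' n, f n) ∈ S.topologicalClosure := by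
  have hclosed : IsClosed (S.topologicalClosure : Set A) :=
    S.isClosed_topologicalClosure
  refine hclosed.mem_of_tendsto hf.hasSum.tendsto_sum_nat ?_
  filter_upwards with n
  exact Subalgebra.sum_mem _ fun i _ =>
    S.le_topologicalClosure (hmem i)

set_option maxHeartbeats 1000000 in
/-- In a unital C*-algebra with states `φ, ψ`, let `a, b` be
conditionally free w.r.t. `(φ, ψ)` (their generated unital C*-subalgebras are
conditionally free), `|t₁| < 1/‖a‖`, `|t₂| < 1/‖b‖`,
`a' = (1-t₁a)⁻¹ - ψ((1-t₁a)⁻¹)·1`, `b' = (1-t₂b)⁻¹ - ψ((1-t₂b)⁻¹)·1`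
(so `ψ a' = ψ b' = 0`).  If `‖ρ a' b'‖ < 1` then
`φ (Σₙ (ρ a' b')^n) = (1 - ρ φ(a') φ(b'))⁻¹`. -/
theorem stmt_5 {A : Type*} [NormedRing A] [StarRing A] [CStarRing A]
    [NormedAlgebra ℂ A] [CompleteSpace A] [StarModule ℂ A]
    (φ ψ : A →L[ℂ] ℂ) (hφ1 : φ 1 = 1) (hψ1 : ψ 1 = 1)
    (hφpos : ∀ x : A, 0 ≤ φ (star x * x)) (hψpos : ∀ x : A, 0 ≤ ψ (star x * x))
    (a b : A) (t₁ t₂ ρ : ℂ)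
    (ht₁ : ‖t₁‖ * ‖a‖ < 1) (ht₂ : ‖t₂‖ * ‖b‖ < 1)
    (hcf : CondFree (fun x => φ x) (fun x => ψ x)
      ((Algebra.adjoin ℂ {a}).topologicalClosure)
      ((Algebra.adjoin ℂ {b}).topologicalClosure)) :
    let a' : A := Ring.inverse (1 - t₁ • a) - (ψ (Ring.inverse (1 - t₁ • a))) • 1
    let b' : A := Ring.inverse (1 - t₂ • b) - (ψ (Ring.inverse (1 - t₂ • b))) • 1
    ψ a' = 0 → ψ b' = 0 → ‖ρ • (a' * b')‖ < 1 →
    φ (∑' n : ℕ, (ρ • (a' * b')) ^ n) = (1 - ρ * φ a' * φ b')⁻¹ := by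
  intro a' b' hψa hψb hx
  set x : A := ρ • (a' * b') with hxdef
  set c : ℂ := ρ * φ a' * φ b' with hc
  -- membership
  have ha1 : ‖t₁ • a‖ < 1 := by
    rw [norm_smul]; exact ht₁
  have hb1 : ‖t₂ • b‖ < 1 := by
    rw [norm_smul]; exact ht₂
  have hmemgen : ∀ (z : A) (h : ‖z‖ < 1) (S : Subalgebra ℂ A), z ∈ S →
      Ring.inverse (1 - z) ∈ S.topologicalClosure := by
    intro z h S hzS
    have hinv : Ring.inverse (1 - z) = ∑' n : ℕ, z ^ n :=
      (geom_series_eq_inverse z h).symm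
    rw [hinv]
    exact tsum_mem_closure S _ (summable_geometric_of_norm_lt_one h)
      (fun n => pow_mem hzS n)
  have hSa : a' ∈ (Algebra.adjoin ℂ {a}).topologicalClosure := by
    have ha0 : a ∈ Algebra.adjoin ℂ ({a} : Set A) := Algebra.subset_adjoin rfl
    have h1 : Ring.inverse (1 - t₁ • a) ∈ (Algebra.adjoin ℂ {a}).topologicalClosure :=
      hmemgen _ ha1 _ ((Algebra.adjoin ℂ ({a} : Set A)).smul_mem ha0 t₁)
    exact sub_mem h1 (((Algebra.adjoin ℂ ({a} : Set A)).topologicalClosure).smul_mem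
      (one_mem _) _)
  have hSb : b' ∈ (Algebra.adjoin ℂ {b}).topologicalClosure := by
    have hb0 : b ∈ Algebra.adjoin ℂ ({b} : Set A) := Algebra.subset_adjoin rfl
    have h1 : Ring.inverse (1 - t₂ • b) ∈ (Algebra.adjoin ℂ {b}).topologicalClosure :=
      hmemgen _ hb1 _ ((Algebra.adjoin ℂ ({b} : Set A)).smul_mem hb0 t₂)
    exact sub_mem h1 (((Algebra.adjoin ℂ ({b} : Set A)).topologicalClosure).smul_mem
      (one_mem _) _)
  -- key moment computation
  have key : ∀ n : ℕ, φ (x ^ n) = c ^ n := by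
    intro n
    rcases Nat.eq_zero_or_pos n with hn | hn
    · subst hn; simp [hφ1]
    have h2n : 2 ≤ 2 * n := by omega
    set w : Fin (2 * n) → A := fun i => if (i : ℕ) % 2 = 0 then a' else b' with hw
    set κ : Fin (2 * n) → Bool := fun i => decide ((i : ℕ) % 2 = 1) with hκ
    have halt : ∀ i : Fin (2 * n), ∀ h : (i : ℕ) + 1 < 2 * n,
        κ i ≠ κ ⟨(i : ℕ) + 1, h⟩ := by
      intro i h
      simp only [hκ, ne_eq, decide_eq_decide]
      omega
    have hmem : ∀ i, w i ∈ (if κ i then (Algebra.adjoin ℂ {b}).topologicalClosure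
        else (Algebra.adjoin ℂ {a}).topologicalClosure) := by
      intro i
      by_cases h : (i : ℕ) % 2 = 0
      · have : κ i = false := by simp [hκ]; omega
        simp [hw, h, this, hSa]
      · have : κ i = true := by simp [hκ]; omega
        simp [hw, h, this, hSb]
    have hψ0 : ∀ i, ψ (w i) = 0 := by
      intro i
      by_cases h : (i : ℕ) % 2 = 0 <;> simp [hw, h, hψa, hψb]
    have hmain := hcf (2 * n) h2n κ halt w hmem hψ0
    have hprodA : (List.ofFn w).prod = (a' * b') ^ n := alt_word_prod a' b' n
    have hprodC : ∏ i, φ (w i) = (φ a' * φ b') ^ n := by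
      rw [← List.prod_ofFn]
      have : (fun i : Fin (2 * n) => φ (w i))
          = fun i : Fin (2 * n) => if (i : ℕ) % 2 = 0 then φ a' else φ b' := by
        funext i; by_cases h : (i : ℕ) % 2 = 0 <;> simp [hw, h]
      rw [this]
      exact alt_word_prod (φ a') (φ b') n
    have hxn : x ^ n = ρ ^ n • (a' * b') ^ n := by
      rw [hxdef, smul_pow]
    have hmain' : φ ((a' * b') ^ n) = ∏ i, φ (w i) := by
      rw [← hprodA]; exact hmain
    rw [hxn, map_smul, smul_eq_mul, hmain', hprodC, hc]
    ring
  -- norm of c < 1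
  have hclt : ‖c‖ < 1 := by
    have hb : ∀ n : ℕ, 0 < n → ‖c‖ ^ n ≤ ‖φ‖ * ‖x‖ ^ n := by
      intro n hn
      calc ‖c‖ ^ n = ‖c ^ n‖ := (norm_pow c n).symm
        _ = ‖φ (x ^ n)‖ := by rw [key n]
        _ ≤ ‖φ‖ * ‖x ^ n‖ := φ.le_opNorm _
        _ ≤ ‖φ‖ * ‖x‖ ^ n :=
            mul_le_mul_of_nonneg_left (norm_pow_le' x hn) (norm_nonneg φ)
    have htend : Filter.Tendsto (fun n : ℕ => ‖c‖ ^ n) Filter.atTop (nhds 0) := by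
      refine squeeze_zero' (g := fun n : ℕ => ‖φ‖ * ‖x‖ ^ n)
        (Filter.Eventually.of_forall fun n => by positivity) ?_ ?_
      · filter_upwards [Filter.eventually_gt_atTop 0] with n hn using hb n hn
      · simpa using
          ((tendsto_pow_atTop_nhds_zero_of_lt_one (norm_nonneg x) hx).const_mul ‖φ‖)
    have := tendsto_pow_atTop_nhds_zero_iff.mp htend
    rwa [abs_of_nonneg (norm_nonneg c)] at this
  -- conclude
  have hsum : Summable (fun n : ℕ => x ^ n) := summable_geometric_of_norm_lt_one hx
  rw [φ.map_tsum hsum]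
  simp_rw [key]
  exact tsum_geometric_of_norm_lt_one hclt
end

section
/- Let (A, φ, ψ) be a unital C*-algebra with two states and a, b ∈ A conditionally free w.r.t. (φ, ψ). With h_a(t) = ψ((1−ta)^{-1}), h̃_a(t) = φ((1−ta)^{-1}) (similarly for b), and a(t₁), b(t₂) the centered resolvents as above, suppose ρ ∈ ℂ satisfies ‖ρ a(t₁)b(t₂)‖ < 1. Then c₀ + c₁a + c₂b + c₃ab (with c_i as in the Haagerup-type expansion) is invertible and φ((c₀ + c₁a + c₂b + c₃ab)^{-1}) = h̃_a(t₁)h̃_b(t₂) / (1 − ρ[h̃_a(t₁) − h_a(t₁)][h̃_b(t₂) − h_b(t₂)]). -/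
/-!
Haagerup's linearization. With `u = (1 - t₁a)⁻¹`, `v = (1 - t₂b)⁻¹` and their `ψ`-centered versions
`X = u - h_a`, `Y = v - h_b`, the element `c₀ + c₁a + c₂b + c₃ab` factors as
`(1 - t₁a)(1 - ρXY)(1 - t₂b)`, so its inverse is `v (∑ ρⁿ (XY)ⁿ) u`. Since `X` and `Y` are
`ψ`-centered and lie in the closed algebras generated by `a` and `b`, conditional freeness
factorizes every alternating moment: `φ(v (XY)ⁿ u) = h̃_b h̃_a (φ(X) φ(Y))ⁿ`. The resulting scalar
geometric series sums to `h̃_a h̃_b / (1 - ρ φ(X) φ(Y))`.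
-/

open scoped ComplexOrder

namespace List

variable {α : Type*}

def altWord (x y : α) : ℕ → List α
  | 0 => []
  | m + 1 => x :: altWord y x m

@[simp]
theorem length_altWord (x y : α) : ∀ m, (altWord x y m).length = m
  | 0 => rfl
  | m + 1 => congrArg (· + 1) (length_altWord y x m)

theorem map_altWord (x y : α) {β : Type*} (f : α → β) :
    ∀ m, (altWord x y m).map f = altWord (f x) (f y) m
  | 0 => rfl
  | m + 1 => congrArg (f x :: ·) (map_altWord y x f m)

theorem mem_altWord (x y : α) {z : α} : ∀ {m}, z ∈ altWord x y m → z = x ∨ z = y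
  | 0, h => by simp [altWord] at h
  | m + 1, h => by
    rcases List.mem_cons.mp h with rfl | h
    · exact .inl rfl
    · exact (mem_altWord y x h).symm

theorem isChain_altWord (x y : α) {R : α → α → Prop} (hxy : R x y) (hyx : R y x) :
    ∀ m, (altWord x y m).IsChain R
  | 0 => .nil
  | 1 => .singleton x
  | m + 2 => .cons_cons hxy (isChain_altWord y x hyx hxy (m + 1))

theorem prod_altWord_two_mul {M : Type*} [Monoid M] (x y : M) :
    ∀ n, (altWord x y (2 * n)).prod = (x * y) ^ n
  | 0 => by simp [altWord]
  | n + 1 => by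
    rw [Nat.mul_succ, pow_succ', ← prod_altWord_two_mul x y n]
    simp [altWord, mul_assoc]

theorem prod_altWord_two_mul_add_one {M : Type*} [Monoid M] (x y : M) (n : ℕ) :
    (altWord x y (2 * n + 1)).prod = (x * y) ^ n * x := by
  rw [mul_pow_mul, ← prod_altWord_two_mul]
  rfl

end List

namespace CondFree

variable {A : Type*} [Ring A] [Algebra ℂ A] {ψ : A → ℂ} {Aa Ab : Subalgebra ℂ A}

theorem apply_list_prod {φ : A → ℂ} (hcf : CondFree φ ψ Aa Ab) (l : List (Bool × A))
    (hl : 2 ≤ l.length) (halt : l.IsChain fun p q => p.1 ≠ q.1)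
    (hmem : ∀ p ∈ l, p.2 ∈ if p.1 then Ab else Aa) (hψ : ∀ p ∈ l, ψ p.2 = 0) :
    φ (l.map Prod.snd).prod = (l.map fun p => φ p.2).prod := by
  have := hcf l.length hl (fun i => l[i.1].1) (fun i h => List.isChain_iff_getElem.mp halt i h)
    (fun i => l[i.1].2) (fun i => hmem _ (l.getElem_mem i.2)) (fun i => hψ _ (l.getElem_mem i.2))
  rwa [List.ofFn_getElem_eq_map l Prod.snd, ← List.prod_ofFn,
    List.ofFn_getElem_eq_map l fun p => φ p.2] at this

theorem apply_prod_altWord {φ : A → ℂ} (hcf : CondFree φ ψ Aa Ab) (hφ1 : φ 1 = 1)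
    {X Y : A} {i j : Bool} (hij : i ≠ j) (hX : X ∈ if i then Ab else Aa)
    (hY : Y ∈ if j then Ab else Aa) (hψX : ψ X = 0) (hψY : ψ Y = 0) :
    ∀ m, φ (List.altWord X Y m).prod = (List.altWord (φ X) (φ Y) m).prod
  | 0 => hφ1
  | 1 => by simp [List.altWord]
  | m + 2 => by
    have hmem : ∀ p ∈ List.altWord (i, X) (j, Y) (m + 2), p = (i, X) ∨ p = (j, Y) :=
      fun p => List.mem_altWord _ _
    have := hcf.apply_list_prod (List.altWord (i, X) (j, Y) (m + 2)) (by simp)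
      (List.isChain_altWord (i, X) (j, Y) (R := fun p q => p.1 ≠ q.1) hij hij.symm _)
      (fun p hp => by rcases hmem p hp with rfl | rfl <;> assumption)
      (fun p hp => by rcases hmem p hp with rfl | rfl <;> assumption)
    simpa only [List.map_altWord] using this

theorem apply_add_smul_one_mul_pow_mul {F : Type*} [FunLike F A ℂ] [LinearMapClass F ℂ A ℂ]
    {φ : F} (hcf : CondFree φ ψ Aa Ab) (hφ1 : φ 1 = 1) {X Y : A}
    (hX : X ∈ Aa) (hY : Y ∈ Ab) (hψX : ψ X = 0) (hψY : ψ Y = 0) (c d : ℂ) (n : ℕ) :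
    φ ((Y + c • 1) * (X * Y) ^ n * (X + d • 1)) = (φ Y + c) * (φ X + d) * (φ X * φ Y) ^ n := by
  have hXY := hcf.apply_prod_altWord hφ1 (i := false) (j := true) (by decide) hX hY hψX hψY
  have hYX := hcf.apply_prod_altWord hφ1 (i := true) (j := false) (by decide) hY hX hψY hψX
  have expand : (Y + c • 1) * (X * Y) ^ n * (X + d • 1) =
      (List.altWord Y X (2 * (n + 1))).prod + d • (List.altWord Y X (2 * n + 1)).prod +
        c • (List.altWord X Y (2 * n + 1)).prod + (c * d) • (List.altWord X Y (2 * n)).prod := by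
    rw [List.prod_altWord_two_mul, List.prod_altWord_two_mul_add_one,
      List.prod_altWord_two_mul_add_one, List.prod_altWord_two_mul, mul_pow_mul, pow_succ,
      ← mul_assoc, mul_pow_mul]
    simp only [add_mul, mul_add, smul_mul_assoc, mul_smul_comm, one_mul, mul_one, mul_assoc]
    module
  rw [expand, map_add, map_add, map_add, map_smul, map_smul, map_smul, hXY, hXY, hYX, hYX,
    List.prod_altWord_two_mul, List.prod_altWord_two_mul, List.prod_altWord_two_mul_add_one,
    List.prod_altWord_two_mul_add_one, smul_eq_mul, smul_eq_mul, smul_eq_mul]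
  ring

end CondFree

theorem Ring.inverse_one_sub_mem {A S : Type*} [NormedRing A] [HasSummableGeomSeries A]
    [SetLike S A] [SubringClass S A] {s : S} (hs : IsClosed (s : Set A)) {x : A} (hx : x ∈ s)
    (h : ‖x‖ < 1) : Ring.inverse (1 - x) ∈ s :=
  hs.mem_of_tendsto (hasSum_geom_series_inverse x h).tendsto_sum_nat
    (.of_forall fun _ => sum_mem fun i _ => pow_mem hx i)

theorem inverse_one_sub_smul_mem_topologicalClosure_adjoin {𝕜 A : Type*} [NormedField 𝕜]
    [NormedRing A] [NormedAlgebra 𝕜 A] [CompleteSpace A] {t : 𝕜} {a : A} (h : ‖t • a‖ < 1) :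
    Ring.inverse (1 - t • a) ∈ (Algebra.adjoin 𝕜 {a}).topologicalClosure :=
  Ring.inverse_one_sub_mem (Subalgebra.isClosed_topologicalClosure _)
    (Subalgebra.le_topologicalClosure _
      (Subalgebra.smul_mem _ (Algebra.self_mem_adjoin_singleton 𝕜 a) t)) h

theorem hasSum_inverse_mul_one_sub_mul {A : Type*} [NormedRing A] [HasSummableGeomSeries A]
    {p q w : A} (hp : IsUnit p) (hq : IsUnit q) (hw : ‖w‖ < 1) :
    HasSum (fun n => Ring.inverse q * w ^ n * Ring.inverse p) (Ring.inverse (p * (1 - w) * q)) := by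
  obtain ⟨P, rfl⟩ := hp
  obtain ⟨Q, rfl⟩ := hq
  obtain ⟨W, hW⟩ := isUnit_one_sub_of_norm_lt_one hw
  have hinv : Ring.inverse (↑P * (1 - w) * ↑Q) = Ring.inverse ↑Q * Ring.inverse (1 - w) * ↑P⁻¹ := by
    rw [← hW, ← Units.val_mul, ← Units.val_mul, Ring.inverse_unit, Ring.inverse_unit,
      Ring.inverse_unit, mul_inv_rev, mul_inv_rev, Units.val_mul, Units.val_mul, mul_assoc]
  rw [hinv, ← Ring.inverse_unit P]
  exact ((hasSum_geom_series_inverse w hw).mul_left _).mul_right _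

theorem HasSum.eq_div_one_sub_of_const_mul_geometric {K : Type*} [NormedField K] {C z s : K}
    (h : HasSum (fun n : ℕ => C * z ^ n) s) : s = C / (1 - z) := by
  -- for `C ≠ 0`, summability alone forces `‖z‖ < 1`
  rcases eq_or_ne C 0 with rfl | hC
  · simp only [zero_mul] at h
    simpa using h.unique hasSum_zero
  · have hz : ‖z‖ < 1 :=
      summable_geometric_iff_norm_lt_one.mp ((summable_mul_left_iff hC).mp h.summable)
    rw [div_eq_mul_inv]
    exact h.unique ((hasSum_geometric_of_norm_lt_one hz).mul_left C)

theorem haagerup_factorization {K A : Type*} [CommRing K] [Ring A] [Algebra K A] {a b u v : A}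
    {t₁ t₂ ρ h k : K} (hu : (1 - t₁ • a) * u = 1) (hv : v * (1 - t₂ • b) = 1) :
    (1 - t₁ • a) * (1 - ρ • ((u - h • 1) * (v - k • 1))) * (1 - t₂ • b) =
      (1 - ρ * (h - 1) * (k - 1)) • (1 : A) + (-t₁ * (1 + ρ * h - ρ * h * k)) • a +
        (-t₂ * (1 + ρ * k - ρ * h * k)) • b + (t₁ * t₂ * (1 - ρ * h * k)) • (a * b) := by
  have hleft : (1 - t₁ • a) * (u - h • 1) = (1 - h) • (1 : A) + (h * t₁) • a := by
    rw [mul_sub, hu, mul_smul_comm, mul_one]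
    module
  have hright : (v - k • 1) * (1 - t₂ • b) = (1 - k) • (1 : A) + (k * t₂) • b := by
    rw [sub_mul, hv, smul_mul_assoc, one_mul]
    module
  have hsplit : ∀ p q U V : A, p * (1 - ρ • (U * V)) * q = p * q - ρ • ((p * U) * (V * q)) := by
    intro p q U V
    simp only [mul_sub, sub_mul, mul_one, mul_smul_comm, smul_mul_assoc, mul_assoc]
  rw [hsplit, hleft, hright]
  simp only [mul_add, add_mul, mul_sub, sub_mul, smul_mul_assoc, mul_smul_comm, mul_one, one_mul]
  module

theorem stmt_6_general {A : Type*} [NormedRing A] [NormedAlgebra ℂ A] [CompleteSpace A]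
    (φ ψ : A →L[ℂ] ℂ) (hφ1 : φ 1 = 1) (hψ1 : ψ 1 = 1)
    (a b : A) (t₁ t₂ ρ : ℂ)
    (ht₁ : ‖t₁‖ * ‖a‖ < 1) (ht₂ : ‖t₂‖ * ‖b‖ < 1)
    (hcf : CondFree (fun x => φ x) (fun x => ψ x)
      ((Algebra.adjoin ℂ {a}).topologicalClosure)
      ((Algebra.adjoin ℂ {b}).topologicalClosure)) :
    let ha : ℂ := ψ (Ring.inverse (1 - t₁ • a))
    let hb : ℂ := ψ (Ring.inverse (1 - t₂ • b))
    let hta : ℂ := φ (Ring.inverse (1 - t₁ • a))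
    let htb : ℂ := φ (Ring.inverse (1 - t₂ • b))
    let at₁ : A := Ring.inverse (1 - t₁ • a) - ha • 1
    let bt₂ : A := Ring.inverse (1 - t₂ • b) - hb • 1
    let c₀ : ℂ := 1 - ρ * (ha - 1) * (hb - 1)
    let c₁ : ℂ := -t₁ * (1 + ρ * ha - ρ * ha * hb)
    let c₂ : ℂ := -t₂ * (1 + ρ * hb - ρ * ha * hb)
    let c₃ : ℂ := t₁ * t₂ * (1 - ρ * ha * hb)
    ‖ρ • (at₁ * bt₂)‖ < 1 →
    IsUnit (c₀ • (1 : A) + c₁ • a + c₂ • b + c₃ • (a * b)) ∧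
    φ (Ring.inverse (c₀ • (1 : A) + c₁ • a + c₂ • b + c₃ • (a * b))) =
      hta * htb / (1 - ρ * (hta - ha) * (htb - hb)) := by
  intro ha hb hta htb X Y c₀ c₁ c₂ c₃ hρ
  have h₁ : ‖t₁ • a‖ < 1 := (norm_smul t₁ a).trans_lt ht₁
  have h₂ : ‖t₂ • b‖ < 1 := (norm_smul t₂ b).trans_lt ht₂
  have hu := isUnit_one_sub_of_norm_lt_one h₁
  have hv := isUnit_one_sub_of_norm_lt_one h₂
  rw [← haagerup_factorization (Ring.mul_inverse_cancel _ hu) (Ring.inverse_mul_cancel _ hv)]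
  refine ⟨(hu.mul (isUnit_one_sub_of_norm_lt_one hρ)).mul hv,
    HasSum.eq_div_one_sub_of_const_mul_geometric ?_⟩
  have hX : X ∈ (Algebra.adjoin ℂ {a}).topologicalClosure :=
    sub_mem (inverse_one_sub_smul_mem_topologicalClosure_adjoin h₁)
      (Subalgebra.smul_mem _ (one_mem _) _)
  have hY : Y ∈ (Algebra.adjoin ℂ {b}).topologicalClosure :=
    sub_mem (inverse_one_sub_smul_mem_topologicalClosure_adjoin h₂)
      (Subalgebra.smul_mem _ (one_mem _) _)
  have hψX : ψ X = 0 := by simp [X, ha, hψ1]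
  have hψY : ψ Y = 0 := by simp [Y, hb, hψ1]
  have hφX : φ X = hta - ha := by simp [X, hta, hφ1]
  have hφY : φ Y = htb - hb := by simp [Y, htb, hφ1]
  have hu' : Ring.inverse (1 - t₁ • a) = X + ha • 1 := (sub_add_cancel _ _).symm
  have hv' : Ring.inverse (1 - t₂ • b) = Y + hb • 1 := (sub_add_cancel _ _).symm
  refine ((hasSum_inverse_mul_one_sub_mul hu hv hρ).map φ φ.continuous).congr_fun fun n => ?_
  rw [Function.comp_apply, hu', hv', smul_pow, mul_smul_comm, smul_mul_assoc, map_smul,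
    hcf.apply_add_smul_one_mul_pow_mul hφ1 hX hY hψX hψY, hφX, hφY, smul_eq_mul,
    mul_assoc ρ, mul_pow]
  ring

/-- with `h_a = ψ((1-t₁a)⁻¹)`, `h̃_a = φ((1-t₁a)⁻¹)` (similarly
for `b`), the centered resolvents `a(t₁), b(t₂)` and the Haagerup coefficients
`c₀, c₁, c₂, c₃`, if `‖ρ a(t₁) b(t₂)‖ < 1` then `c₀·1 + c₁a + c₂b + c₃ab` is
invertible with
`φ((c₀+c₁a+c₂b+c₃ab)⁻¹) = h̃_a h̃_b / (1 - ρ(h̃_a - h_a)(h̃_b - h_b))`. -/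
theorem stmt_6 {A : Type*} [NormedRing A] [StarRing A] [CStarRing A]
    [NormedAlgebra ℂ A] [CompleteSpace A] [StarModule ℂ A]
    (φ ψ : A →L[ℂ] ℂ) (hφ1 : φ 1 = 1) (hψ1 : ψ 1 = 1)
    (hφpos : ∀ x : A, 0 ≤ φ (star x * x)) (hψpos : ∀ x : A, 0 ≤ ψ (star x * x))
    (a b : A) (t₁ t₂ ρ : ℂ)
    (ht₁ : ‖t₁‖ * ‖a‖ < 1) (ht₂ : ‖t₂‖ * ‖b‖ < 1)
    (hcf : CondFree (fun x => φ x) (fun x => ψ x)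
      ((Algebra.adjoin ℂ {a}).topologicalClosure)
      ((Algebra.adjoin ℂ {b}).topologicalClosure)) :
    let ha : ℂ := ψ (Ring.inverse (1 - t₁ • a))
    let hb : ℂ := ψ (Ring.inverse (1 - t₂ • b))
    let hta : ℂ := φ (Ring.inverse (1 - t₁ • a))
    let htb : ℂ := φ (Ring.inverse (1 - t₂ • b))
    let at₁ : A := Ring.inverse (1 - t₁ • a) - ha • 1
    let bt₂ : A := Ring.inverse (1 - t₂ • b) - hb • 1
    let c₀ : ℂ := 1 - ρ * (ha - 1) * (hb - 1)
    let c₁ : ℂ := -t₁ * (1 + ρ * ha - ρ * ha * hb)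
    let c₂ : ℂ := -t₂ * (1 + ρ * hb - ρ * ha * hb)
    let c₃ : ℂ := t₁ * t₂ * (1 - ρ * ha * hb)
    ‖ρ • (at₁ * bt₂)‖ < 1 →
    IsUnit (c₀ • (1 : A) + c₁ • a + c₂ • b + c₃ • (a * b)) ∧
    φ (Ring.inverse (c₀ • (1 : A) + c₁ • a + c₂ • b + c₃ • (a * b))) =
      hta * htb / (1 - ρ * (hta - ha) * (htb - hb)) :=
  stmt_6_general φ ψ hφ1 hψ1 a b t₁ t₂ ρ ht₁ ht₂ hcf
end

section
/- Let a be an element of a unital C*-algebra A with state ψ and define h_a(t) = ψ((1 − ta)^{-1}) for |t| < 1/‖a‖ and k_a(t) = t·h_a(t). Then k_a is an injective holomorphic function on the disc B(0, 1/(4‖a‖)) and its image contains the disc B(0, 1/(6‖a‖)). -/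
open scoped ComplexOrder
open Complex

section state

variable {A : Type*} [NormedRing A] [StarRing A] [CStarRing A]
    [NormedAlgebra ℂ A] [CompleteSpace A] [StarModule ℂ A]
    (ψ : A →L[ℂ] ℂ) (hψ1 : ψ 1 = 1)
    (hψpos : ∀ x : A, 0 ≤ ψ (star x * x))

include hψ1 hψpos in
lemma aux_expand (x : A) (t : ℂ) :
    ψ (star (x + t • (1:A)) * (x + t • 1)) =
      ψ (star x * x) + t * ψ (star x) + (starRingEnd ℂ t) * ψ x + (starRingEnd ℂ t) * t := by
  have hst : star (x + t • (1:A)) * (x + t • 1)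
      = star x * x + t • star x + (starRingEnd ℂ t) • x + ((starRingEnd ℂ t) * t) • (1:A) := by
    rw [star_add, star_smul, star_one, Complex.star_def]
    rw [add_mul, mul_add, mul_add]
    rw [mul_smul_comm, mul_one, smul_mul_assoc, one_mul, smul_mul_assoc, one_mul,
      smul_smul]
    abel
  rw [hst]
  simp only [map_add, map_smul, smul_eq_mul, hψ1, mul_one]

include hψ1 hψpos in
lemma aux_star_apply (x : A) : ψ (star x) = starRingEnd ℂ (ψ x) := by
  have him : ∀ t : ℂ, (ψ (star x * x) + t * ψ (star x) + (starRingEnd ℂ t) * ψ x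
      + (starRingEnd ℂ t) * t).im = 0 := by
    intro t
    have h := hψpos (x + t • 1)
    rw [aux_expand ψ hψ1 hψpos x t, Complex.le_def] at h
    simpa using h.2.symm
  have h0 : (ψ (star x * x)).im = 0 := by
    have h := hψpos x
    rw [Complex.le_def] at h
    simpa using h.2.symm
  have h1 := him 1
  have h2 := him Complex.I
  simp [Complex.add_im, Complex.mul_im, h0, Complex.conj_re, Complex.conj_im] at h1 h2
  apply Complex.ext <;> simp [Complex.conj_re, Complex.conj_im] <;> linarith

include hψ1 hψpos in
lemma aux_cs (x : A) : ‖ψ x‖^2 ≤ (ψ (star x * x)).re := by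
  have hstar := aux_star_apply ψ hψ1 hψpos x
  have h := hψpos (x + (-(ψ x)) • 1)
  rw [aux_expand ψ hψ1 hψpos x (-(ψ x)), Complex.le_def] at h
  have hre := h.1
  have hn : ‖ψ x‖^2 = (ψ x).re^2 + (ψ x).im^2 := by
    rw [Complex.sq_norm, Complex.normSq_apply]; ring
  simp only [hstar, map_neg, Complex.add_re, Complex.neg_re, Complex.neg_im, Complex.mul_re,
    Complex.conj_re, Complex.conj_im, Complex.zero_re] at hre
  nlinarith [hre]

include hψ1 hψpos in
lemma aux_re_nonneg (x : A) : 0 ≤ (ψ (star x * x)).re := by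
  have h := hψpos x
  rw [Complex.le_def] at h
  simpa using h.1

include hψ1 hψpos in
lemma aux_norm (x : A) : ‖ψ x‖ ≤ ‖x‖ := by
  set b := star x * x with hb
  have hbsa : star b = b := by simp [hb, mul_assoc]
  have hpowsa : ∀ m : ℕ, star (b ^ m) = b ^ m := fun m => by rw [star_pow, hbsa]
  have hbre : 0 ≤ (ψ b).re := aux_re_nonneg ψ hψ1 hψpos x
  have key : ∀ n : ℕ, ((ψ b).re) ^ (2 ^ n) ≤ (ψ (b ^ (2 ^ n))).re := by
    intro n
    induction n with
    | zero => simp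
    | succ n ih =>
      have h1 : 0 ≤ ((ψ b).re) ^ (2 ^ n) := pow_nonneg hbre _
      have h2 : ((ψ (b ^ (2 ^ n))).re) ^ 2 ≤ ‖ψ (b ^ (2 ^ n))‖ ^ 2 := by
        have := Complex.abs_re_le_norm (ψ (b ^ (2 ^ n)))
        have h0 : |(ψ (b ^ (2 ^ n))).re| ^ 2 = ((ψ (b ^ (2 ^ n))).re) ^ 2 := sq_abs _
        nlinarith [abs_nonneg (ψ (b ^ (2 ^ n))).re]
      have h3 : ‖ψ (b ^ (2 ^ n))‖ ^ 2 ≤ (ψ (star (b ^ (2 ^ n)) * b ^ (2 ^ n))).re :=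
        aux_cs ψ hψ1 hψpos _
      have h4 : star (b ^ (2 ^ n)) * b ^ (2 ^ n) = b ^ (2 ^ (n + 1)) := by
        rw [hpowsa, ← pow_add, ← two_mul, ← pow_succ']
      have h5 : ((ψ b).re) ^ (2 ^ (n + 1)) = (((ψ b).re) ^ (2 ^ n)) ^ 2 := by
        rw [← pow_mul, pow_succ]
      calc ((ψ b).re) ^ (2 ^ (n+1)) = (((ψ b).re) ^ (2 ^ n)) ^ 2 := h5
        _ ≤ ((ψ (b ^ (2 ^ n))).re) ^ 2 := pow_le_pow_left₀ h1 ih 2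
        _ ≤ ‖ψ (b ^ (2 ^ n))‖ ^ 2 := h2
        _ ≤ (ψ (star (b ^ (2 ^ n)) * b ^ (2 ^ n))).re := h3
        _ = (ψ (b ^ (2 ^ (n+1)))).re := by rw [h4]
  have hble : (ψ b).re ≤ ‖b‖ := by
    by_contra hcon
    push_neg at hcon
    have hbpos : 0 < ‖b‖ := by
      rcases (norm_nonneg b).eq_or_lt' with h0 | h0
      · exfalso
        have hb0 : b = 0 := norm_eq_zero.mp h0
        rw [hb0] at hcon
        simp at hcon
      · exact h0
    set q := (ψ b).re / ‖b‖ with hq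
    have hq1 : 1 < q := (one_lt_div hbpos).mpr hcon
    have hbound : ∀ n : ℕ, q ^ (2 ^ n) ≤ ‖ψ‖ := by
      intro n
      have h1 := key n
      have h2 : (ψ (b ^ (2 ^ n))).re ≤ ‖ψ (b ^ (2 ^ n))‖ := by
        exact (le_abs_self _).trans (Complex.abs_re_le_norm _)
      have h3 : ‖ψ (b ^ (2 ^ n))‖ ≤ ‖ψ‖ * ‖b ^ (2 ^ n)‖ := ψ.le_opNorm _
      have h4 : ‖b ^ (2 ^ n)‖ ≤ ‖b‖ ^ (2 ^ n) := norm_pow_le' b (Nat.two_pow_pos n)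
      have h5 : ((ψ b).re) ^ (2 ^ n) ≤ ‖ψ‖ * ‖b‖ ^ (2 ^ n) := by
        calc ((ψ b).re) ^ (2 ^ n) ≤ (ψ (b ^ (2 ^ n))).re := h1
          _ ≤ ‖ψ (b ^ (2 ^ n))‖ := h2
          _ ≤ ‖ψ‖ * ‖b ^ (2 ^ n)‖ := h3
          _ ≤ ‖ψ‖ * ‖b‖ ^ (2 ^ n) := by
              exact mul_le_mul_of_nonneg_left h4 (norm_nonneg _)
      rw [hq, div_pow, div_le_iff₀ (by positivity)]
      exact h5
    obtain ⟨n, hn⟩ := pow_unbounded_of_one_lt ‖ψ‖ hq1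
    have hmono : q ^ n ≤ q ^ (2 ^ n) :=
      pow_le_pow_right₀ hq1.le (Nat.le_of_lt (Nat.lt_two_pow_self))
    exact absurd (hbound n) (not_le.mpr (lt_of_lt_of_le hn hmono))
  have hcs := aux_cs ψ hψ1 hψpos x
  have hnb : ‖b‖ = ‖x‖ * ‖x‖ := CStarRing.norm_star_mul_self
  nlinarith [norm_nonneg (ψ x), norm_nonneg x]


end state

lemma aux_pow_sub_pow {t s : ℂ} {R : ℝ} (ht : ‖t‖ ≤ R) (hs : ‖s‖ ≤ R) (m : ℕ) :
    ‖t ^ (m + 1) - s ^ (m + 1)‖ ≤ (m + 1) * R ^ m * ‖t - s‖ := by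
  have hR : 0 ≤ R := le_trans (norm_nonneg t) ht
  induction m with
  | zero => simp
  | succ m ih =>
    have hid : t ^ (m + 2) - s ^ (m + 2) = t ^ (m + 1) * (t - s) + (t ^ (m + 1) - s ^ (m + 1)) * s := by
      ring
    calc ‖t ^ (m + 2) - s ^ (m + 2)‖
        ≤ ‖t ^ (m + 1) * (t - s)‖ + ‖(t ^ (m + 1) - s ^ (m + 1)) * s‖ := by
          rw [hid]; exact norm_add_le _ _
      _ ≤ R ^ (m + 1) * ‖t - s‖ + ((m + 1) * R ^ m * ‖t - s‖) * R := by
          gcongr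
          · rw [norm_mul]
            gcongr
            calc ‖t ^ (m + 1)‖ ≤ ‖t‖ ^ (m + 1) := norm_pow_le' t m.succ_pos
              _ ≤ R ^ (m + 1) := pow_le_pow_left₀ (norm_nonneg t) ht _
          · rw [norm_mul]
            exact mul_le_mul ih hs (norm_nonneg s) (by positivity)
      _ = ((m : ℝ) + 1 + 1) * R ^ (m + 1) * ‖t - s‖ := by ring
      _ = ((m + 1 : ℕ) + 1) * R ^ (m + 1) * ‖t - s‖ := by push_cast; ring

lemma aux_hasSum_79 : HasSum (fun n : ℕ => ((n : ℝ) + 2) * (1/4) ^ (n + 1)) (7/9) := by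
  have h1 : HasSum (fun n : ℕ => (n : ℝ) * (1/4) ^ n) ((1/4) / (1 - 1/4) ^ 2) :=
    hasSum_coe_mul_geometric_of_norm_lt_one (by rw [Real.norm_eq_abs, abs_lt]; constructor <;> norm_num)
  have h2 : HasSum (fun n : ℕ => (1/4 : ℝ) ^ n) (1 - 1/4)⁻¹ :=
    hasSum_geometric_of_lt_one (by norm_num) (by norm_num)
  have h := (h1.mul_left (1/4)).add (h2.mul_left (2 * (1/4)))
  have h4 : (fun n : ℕ => ((n : ℝ) + 2) * (1/4) ^ (n + 1))
      = fun n : ℕ => (1/4) * ((n : ℝ) * (1/4) ^ n) + (2 * (1/4)) * (1/4) ^ n := by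
    funext n; rw [pow_succ]; ring
  have h5 : (7/9 : ℝ) = (1/4) * ((1/4) / (1 - 1/4) ^ 2) + (2 * (1/4)) * (1 - 1/4)⁻¹ := by norm_num
  rw [h4, h5]; exact h

lemma aux_hasSum_13 : HasSum (fun n : ℕ => (1/4 : ℝ) ^ (n + 1)) (1/3) := by
  have h2 : HasSum (fun n : ℕ => (1/4 : ℝ) ^ n) (1 - 1/4)⁻¹ :=
    hasSum_geometric_of_lt_one (by norm_num) (by norm_num)
  have h := h2.mul_left (1/4)
  have h4 : (fun n : ℕ => (1/4 : ℝ) ^ (n + 1)) = fun n : ℕ => (1/4) * (1/4 : ℝ) ^ n := by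
    funext n; rw [pow_succ]; ring
  have h5 : (1/3 : ℝ) = (1/4) * (1 - 1/4)⁻¹ := by norm_num
  rw [h4, h5]; exact h

/-- For `a` in a unital C*-algebra with state `ψ`,
`h_a(t) = ψ((1-ta)⁻¹)` and `k_a(t) = t h_a(t)`, the function `k_a` is an
injective holomorphic function on the disc `B(0, 1/(4‖a‖))` whose image
contains the disc `B(0, 1/(6‖a‖))`. -/
theorem stmt_7 {A : Type*} [NormedRing A] [StarRing A] [CStarRing A]
    [NormedAlgebra ℂ A] [CompleteSpace A] [StarModule ℂ A]
    (ψ : A →L[ℂ] ℂ) (hψ1 : ψ 1 = 1)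
    (hψpos : ∀ x : A, 0 ≤ ψ (star x * x)) (a : A) :
    let k : ℂ → ℂ := fun t => t * ψ (Ring.inverse (1 - t • a))
    Set.InjOn k (Metric.ball (0 : ℂ) (1 / (4 * ‖a‖))) ∧
    DifferentiableOn ℂ k (Metric.ball (0 : ℂ) (1 / (4 * ‖a‖))) ∧
    Metric.ball (0 : ℂ) (1 / (6 * ‖a‖)) ⊆
      k '' (Metric.ball (0 : ℂ) (1 / (4 * ‖a‖))) := by
  intro k
  rcases eq_or_ne a 0 with rfl | ha0
  · rw [norm_zero, mul_zero, div_zero, Metric.ball_zero]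
    exact ⟨Set.injOn_empty _, differentiableOn_empty, by simp⟩
  have ha : 0 < ‖a‖ := norm_pos_iff.mpr ha0
  have hnt : Nontrivial A := nontrivial_of_ne a 0 ha0
  have hψn : ∀ x : A, ‖ψ x‖ ≤ ‖x‖ := aux_norm ψ hψ1 hψpos
  set r : ℝ := 1 / (4 * ‖a‖) with hrdef
  have hrpos : 0 < r := by rw [hrdef]; positivity
  have hra : r * ‖a‖ = 1 / 4 := by rw [hrdef]; field_simp
  have hc : ∀ n : ℕ, ‖ψ (a ^ n)‖ ≤ ‖a‖ ^ n := by
    intro n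
    refine (hψn _).trans ?_
    cases n with
    | zero => simp
    | succ m => exact norm_pow_le' a m.succ_pos
  set g : ℂ → ℂ := fun t => ∑' n : ℕ, t ^ (n + 2) * ψ (a ^ (n + 1)) with hgdef
  have htb : ∀ t : ℂ, ‖t‖ ≤ r → ∀ n : ℕ, ‖t ^ (n + 2) * ψ (a ^ (n + 1))‖ ≤ r * (1/4) ^ (n + 1) := by
    intro t ht n
    rw [norm_mul, norm_pow]
    calc ‖t‖ ^ (n + 2) * ‖ψ (a ^ (n + 1))‖ ≤ r ^ (n + 2) * ‖a‖ ^ (n + 1) := by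
          exact mul_le_mul (pow_le_pow_left₀ (norm_nonneg t) ht _) (hc _) (norm_nonneg _)
            (by positivity)
      _ = r * ((r * ‖a‖) ^ (n + 1)) := by ring
      _ = r * (1/4) ^ (n + 1) := by rw [hra]
  have hsumm : ∀ t : ℂ, ‖t‖ ≤ r → Summable (fun n : ℕ => t ^ (n + 2) * ψ (a ^ (n + 1))) :=
    fun t ht => Summable.of_norm_bounded (aux_hasSum_13.mul_left r).summable (htb t ht)
  have hgb : ∀ t : ℂ, ‖t‖ ≤ r → ‖g t‖ ≤ r / 3 := by
    intro t ht
    have h := tsum_of_norm_bounded (aux_hasSum_13.mul_left r) (htb t ht)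
    rw [hgdef]
    calc ‖∑' n : ℕ, t ^ (n + 2) * ψ (a ^ (n + 1))‖ ≤ r * (1/3) := h
      _ = r / 3 := by ring
  have hlip : ∀ t s : ℂ, ‖t‖ ≤ r → ‖s‖ ≤ r → ‖g t - g s‖ ≤ 7/9 * ‖t - s‖ := by
    intro t s ht hs
    have hsub : g t - g s = ∑' n : ℕ, (t ^ (n + 2) - s ^ (n + 2)) * ψ (a ^ (n + 1)) := by
      rw [hgdef]
      simp only
      rw [← Summable.tsum_sub (hsumm t ht) (hsumm s hs)]
      exact tsum_congr fun n => by ring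
    rw [hsub]
    have hb : ∀ n : ℕ, ‖(t ^ (n + 2) - s ^ (n + 2)) * ψ (a ^ (n + 1))‖ ≤
        (((n : ℝ) + 2) * (1/4) ^ (n + 1)) * ‖t - s‖ := by
      intro n
      rw [norm_mul]
      have hps : ‖t ^ (n + 2) - s ^ (n + 2)‖ ≤ ((n : ℝ) + 1 + 1) * r ^ (n + 1) * ‖t - s‖ := by
        have := aux_pow_sub_pow ht hs (n + 1)
        push_cast at this
        convert this using 2 <;> ring
      calc ‖t ^ (n + 2) - s ^ (n + 2)‖ * ‖ψ (a ^ (n + 1))‖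
          ≤ (((n : ℝ) + 1 + 1) * r ^ (n + 1) * ‖t - s‖) * ‖a‖ ^ (n + 1) :=
            mul_le_mul hps (hc _) (norm_nonneg _) (by positivity)
        _ = (((n : ℝ) + 2) * ((r * ‖a‖) ^ (n + 1))) * ‖t - s‖ := by ring
        _ = (((n : ℝ) + 2) * (1/4) ^ (n + 1)) * ‖t - s‖ := by rw [hra]
    exact tsum_of_norm_bounded (aux_hasSum_79.mul_right ‖t - s‖) hb
  have hta : ∀ t : ℂ, ‖t‖ < r → ‖t • a‖ < 1 := by
    intro t ht
    rw [norm_smul]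
    calc ‖t‖ * ‖a‖ < r * ‖a‖ := mul_lt_mul_of_pos_right ht ha
      _ = 1/4 := hra
      _ < 1 := by norm_num
  have hk : ∀ t : ℂ, ‖t‖ < r → k t = t + g t := by
    intro t ht
    have hinv := hasSum_geom_series_inverse (t • a) (hta t ht)
    have h2 : HasSum (fun n : ℕ => t ^ n * ψ (a ^ n)) (ψ (Ring.inverse (1 - t • a))) := by
      have h := ψ.hasSum hinv
      simpa [smul_pow, map_smul, smul_eq_mul] using h
    show t * ψ (Ring.inverse (1 - t • a)) = t + g t
    rw [← h2.tsum_eq, Summable.tsum_eq_zero_add h2.summable]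
    simp only [pow_zero, one_mul, hψ1]
    rw [mul_add, mul_one]
    congr 1
    rw [hgdef, ← tsum_mul_left]
    exact tsum_congr fun n => by ring
  refine ⟨?_, ?_, ?_⟩
  · intro t htm s hsm heq
    rw [mem_ball_zero_iff] at htm hsm
    have h1 : t + g t = s + g s := by rw [← hk t htm, ← hk s hsm]; exact heq
    have h2 : t - s = g s - g t := by linear_combination h1
    have h3 := hlip s t hsm.le htm.le
    rw [← h2, norm_sub_rev s t] at h3
    have h0 : ‖t - s‖ = 0 := by nlinarith [norm_nonneg (t - s)]
    exact sub_eq_zero.mp (norm_eq_zero.mp h0)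
  · intro t htm
    have ht : ‖t‖ < r := mem_ball_zero_iff.mp htm
    have hu : IsUnit (1 - t • a) := isUnit_one_sub_of_norm_lt_one (hta t ht)
    apply DifferentiableAt.differentiableWithinAt
    have hin : DifferentiableAt ℂ (fun z : ℂ => (1 : A) - z • a) t :=
      ((differentiable_id.smul_const a).const_sub 1).differentiableAt
    have hmid : DifferentiableAt ℂ (fun z : ℂ => Ring.inverse ((1 : A) - z • a)) t :=
      ((differentiableAt_inverse (𝕜 := ℂ) hu).comp t hin :)
    have hout : DifferentiableAt ℂ (fun z : ℂ => ψ (Ring.inverse ((1 : A) - z • a))) t :=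
      ψ.differentiableAt.comp t hmid
    exact differentiableAt_fun_id.mul hout
  · intro w hw
    rw [mem_ball_zero_iff] at hw
    have hw' : ‖w‖ < 2 * r / 3 := by
      have h6 : 1 / (6 * ‖a‖) = 2 * r / 3 := by rw [hrdef]; field_simp; ring
      rwa [h6] at hw
    set S := Metric.closedBall (0 : ℂ) r with hS
    have hScomp : IsComplete S := Metric.isClosed_closedBall.isComplete
    have hmaps : Set.MapsTo (fun t : ℂ => w - g t) S S := by
      intro t htS
      rw [hS, Metric.mem_closedBall, dist_zero_right] at htS ⊢
      calc ‖w - g t‖ ≤ ‖w‖ + ‖g t‖ := norm_sub_le _ _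
        _ ≤ 2 * r / 3 + r / 3 := add_le_add hw'.le (hgb t htS)
        _ = r := by ring
    have hK : ContractingWith (⟨7/9, by norm_num⟩ : NNReal) (hmaps.restrict _ S S) := by
      constructor
      · apply NNReal.coe_lt_coe.mp; exact (by norm_num : (7/9 : ℝ) < 1)
      · apply LipschitzWith.of_dist_le_mul
        rintro ⟨x, hx⟩ ⟨y, hy⟩
        have hx' : ‖x‖ ≤ r := by simpa [hS, mem_closedBall_zero_iff] using hx
        have hy' : ‖y‖ ≤ r := by simpa [hS, mem_closedBall_zero_iff] using hy
        have hxy := hlip y x hy' hx'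
        rw [norm_sub_rev y x] at hxy
        show dist (w - g x) (w - g y) ≤ _ * dist x y
        rw [dist_eq_norm, dist_eq_norm]
        have heq : w - g x - (w - g y) = g y - g x := by ring
        rw [heq]
        calc ‖g y - g x‖ ≤ 7/9 * ‖x - y‖ := hxy
          _ = (⟨7/9, by norm_num⟩ : NNReal) * ‖x - y‖ := by norm_num
    have h0S : (0 : ℂ) ∈ S := by simp [hS, hrpos.le]
    have hed : edist (0 : ℂ) ((fun t : ℂ => w - g t) 0) ≠ ⊤ := edist_ne_top _ _
    set x := ContractingWith.efixedPoint' (fun t : ℂ => w - g t) hScomp hmaps hK 0 h0S hed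
      with hxdef
    have hxS : x ∈ S := ContractingWith.efixedPoint_mem' hScomp hmaps hK h0S hed
    have hxfix : w - g x = x := ContractingWith.efixedPoint_isFixedPt' hScomp hmaps hK h0S hed
    have hxr : ‖x‖ ≤ r := by simpa [hS, mem_closedBall_zero_iff] using hxS
    have hxlt : ‖x‖ < r := by
      rw [← hxfix]
      calc ‖w - g x‖ ≤ ‖w‖ + ‖g x‖ := norm_sub_le _ _
        _ < 2 * r / 3 + r / 3 := add_lt_add_of_lt_of_le hw' (hgb x hxr)
        _ = r := by ring
    refine ⟨x, mem_ball_zero_iff.mpr hxlt, ?_⟩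
    rw [hk x hxlt]
    linear_combination -hxfix
end

section
/- Let (A, φ, ψ) be a unital C*-algebra with two states and a ∈ A. If φ is a unital *-homomorphism, then for all z in the domain of definition, the conditionally free R-transform satisfies R_a^{(φ,ψ)}(z) = φ(a); consequently for any b ∈ A, R_{a+b}^{(φ,ψ)}(z) = R_a^{(φ,ψ)}(z) + R_b^{(φ,ψ)}(z). -/
open scoped ComplexOrder

private lemma key_lemma {A : Type*} [NormedRing A] [StarRing A] [CStarRing A]
    [NormedAlgebra ℂ A] [CompleteSpace A] [StarModule ℂ A]
    (φ : A →L[ℂ] ℂ) (hφ1 : φ 1 = 1)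
    (hφmul : ∀ x y : A, φ (x * y) = φ x * φ y)
    (a : A) (t : ℂ) (ht : t ≠ 0) (h : ‖t‖ * ‖a‖ < 1) :
    1 / t - 1 / (t * φ (Ring.inverse (1 - t • a))) = φ a := by
  have hn : ‖t • a‖ < 1 := by rwa [norm_smul]
  set u := Units.oneSub (t • a) hn with hu
  have hinv : Ring.inverse (1 - t • a) = (↑u⁻¹ : A) := by
    rw [hu, ← Units.val_oneSub (t • a) hn, Ring.inverse_unit]
  have hmul : φ (↑u : A) * φ (↑u⁻¹ : A) = 1 := by
    rw [← hφmul, Units.mul_inv, hφ1]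
  have hφu : φ (↑u : A) = 1 - t * φ a := by
    rw [hu, Units.val_oneSub, map_sub, map_smul, hφ1]
    rfl
  have hne : (1 - t * φ a) ≠ 0 := by
    intro h0
    rw [hφu, h0, zero_mul] at hmul
    exact zero_ne_one hmul
  have hc : φ (↑u⁻¹ : A) = (1 - t * φ a)⁻¹ := by
    rw [hφu] at hmul
    exact (inv_eq_of_mul_eq_one_right hmul).symm
  rw [hinv, hc]
  field_simp
  ring

/-- if `φ` is a unital *-homomorphism then the conditionally
free R-transform of any `a` is the constant `φ(a)`: writing `z = k_a(t)` with
`t = k_a⁻¹(z)` in the domain, `R_a^{(φ,ψ)}(z) = 1/t - 1/k̃_a(t) = φ(a)` where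
`k̃_a(t) = t φ((1-ta)⁻¹)`.  Consequently `R_{a+b} = R_a + R_b` (each evaluated
through the corresponding preimages). -/
theorem stmt_11 {A : Type*} [NormedRing A] [StarRing A] [CStarRing A]
    [NormedAlgebra ℂ A] [CompleteSpace A] [StarModule ℂ A]
    (φ ψ : A →L[ℂ] ℂ) (hφ1 : φ 1 = 1) (hψ1 : ψ 1 = 1)
    (hφpos : ∀ x : A, 0 ≤ φ (star x * x)) (hψpos : ∀ x : A, 0 ≤ ψ (star x * x))
    (hφmul : ∀ x y : A, φ (x * y) = φ x * φ y)
    (hφstar : ∀ x : A, φ (star x) = starRingEnd ℂ (φ x)) (a b : A) :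
    (∀ t : ℂ, t ≠ 0 → ‖t‖ * ‖a‖ < 1 →
      1 / t - 1 / (t * φ (Ring.inverse (1 - t • a))) = φ a) ∧
    (∀ t₁ t₂ t₃ : ℂ, t₁ ≠ 0 → t₂ ≠ 0 → t₃ ≠ 0 →
      ‖t₁‖ * ‖a‖ < 1 → ‖t₂‖ * ‖b‖ < 1 → ‖t₃‖ * ‖a + b‖ < 1 →
      1 / t₃ - 1 / (t₃ * φ (Ring.inverse (1 - t₃ • (a + b)))) =
        (1 / t₁ - 1 / (t₁ * φ (Ring.inverse (1 - t₁ • a)))) +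
        (1 / t₂ - 1 / (t₂ * φ (Ring.inverse (1 - t₂ • b))))) := by
  constructor
  · exact fun t ht h => key_lemma φ hφ1 hφmul a t ht h
  · intro t₁ t₂ t₃ h₁ h₂ h₃ hn₁ hn₂ hn₃
    rw [key_lemma φ hφ1 hφmul a t₁ h₁ hn₁, key_lemma φ hφ1 hφmul b t₂ h₂ hn₂,
      key_lemma φ hφ1 hφmul (a + b) t₃ h₃ hn₃, map_add]
end

section
/- Let (A, φ, ψ) be a unital C*-algebra with two states and a ∈ A. Then the conditionally free R-transform satisfies the analytic relation R_a^{(φ,ψ)}(G_a^ψ(λ)) = λ − 1/G_a^φ(λ) for λ with |λ| sufficiently large (specifically 1/|λ| in the domain where k_a is invertible and G_a^φ(λ) ≠ 0). -/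
open scoped ComplexOrder

theorem Ring.inverse_smul_one_sub_eq {𝕜 A : Type*} [Field 𝕜] [Ring A] [Algebra 𝕜 A]
    (a : A) {z : 𝕜} (hz : z ≠ 0) :
    Ring.inverse (z • (1 : A) - a) = z⁻¹ • Ring.inverse (1 - z⁻¹ • a) := by
  lift z to 𝕜ˣ using hz.isUnit
  have h := congr(z⁻¹ • $(spectrum.units_smul_resolvent_self (r := z) (a := a)))
  simpa [resolvent, Algebra.algebraMap_eq_smul_one, Units.smul_def] using h

theorem stmt_12_general {A : Type*} [NormedRing A] [NormedAlgebra ℂ A]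
    (φ ψ : A →L[ℂ] ℂ)
    (a : A) (lam : ℂ) (hlam : ‖a‖ < ‖lam‖) :
    -- `k_a(λ⁻¹) = G_a^ψ(λ)`, i.e. `λ⁻¹` is the `k_a`-preimage of `G_a^ψ(λ)`
    lam⁻¹ * ψ (Ring.inverse (1 - lam⁻¹ • a)) =
      ψ (Ring.inverse (lam • (1 : A) - a)) ∧
    -- `R_a^{(φ,ψ)}(G_a^ψ(λ)) = λ - 1/G_a^φ(λ)`
    1 / lam⁻¹ - 1 / (lam⁻¹ * φ (Ring.inverse (1 - lam⁻¹ • a))) =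
      lam - 1 / φ (Ring.inverse (lam • (1 : A) - a)) := by
  have hlam0 : lam ≠ 0 := norm_pos_iff.mp ((norm_nonneg a).trans_lt hlam)
  rw [Ring.inverse_smul_one_sub_eq a hlam0, map_smul, map_smul, smul_eq_mul, smul_eq_mul]
  exact ⟨rfl, by rw [one_div, inv_inv]⟩

/-- analytic relation for the conditionally free R-transform:
`R_a^{(φ,ψ)}(G_a^ψ(λ)) = λ - 1/G_a^φ(λ)` for `|λ| > ‖a‖` with `G_a^φ(λ) ≠ 0`.
Here `k_a(t) = t ψ((1-ta)⁻¹)` satisfies `k_a(λ⁻¹) = G_a^ψ(λ)` (so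
`k_a⁻¹(G_a^ψ(λ)) = λ⁻¹`), and
`R_a^{(φ,ψ)}(G_a^ψ(λ)) = 1/λ⁻¹ - 1/k̃_a(λ⁻¹) = λ - 1/G_a^φ(λ)`. -/
theorem stmt_12 {A : Type*} [NormedRing A] [StarRing A] [CStarRing A]
    [NormedAlgebra ℂ A] [CompleteSpace A] [StarModule ℂ A]
    (φ ψ : A →L[ℂ] ℂ) (hφ1 : φ 1 = 1) (hψ1 : ψ 1 = 1)
    (hφpos : ∀ x : A, 0 ≤ φ (star x * x)) (hψpos : ∀ x : A, 0 ≤ ψ (star x * x))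
    (a : A) (lam : ℂ) (hlam : ‖a‖ < ‖lam‖)
    (hG : φ (Ring.inverse (lam • (1 : A) - a)) ≠ 0) :
    -- `k_a(λ⁻¹) = G_a^ψ(λ)`, i.e. `λ⁻¹` is the `k_a`-preimage of `G_a^ψ(λ)`
    lam⁻¹ * ψ (Ring.inverse (1 - lam⁻¹ • a)) =
      ψ (Ring.inverse (lam • (1 : A) - a)) ∧
    -- `R_a^{(φ,ψ)}(G_a^ψ(λ)) = λ - 1/G_a^φ(λ)`
    1 / lam⁻¹ - 1 / (lam⁻¹ * φ (Ring.inverse (1 - lam⁻¹ • a))) =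
      lam - 1 / φ (Ring.inverse (lam • (1 : A) - a)) :=
  stmt_12_general φ ψ a lam hlam
end
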